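/- There exists a constant C > 0, depending only on ξ and α, such that for every f ∈ C_{w̄} and every sufficiently large n ∈ ℕ, ‖w̄ · B̄n(f,·)‖ ≤ C ‖w̄ f‖, i.e. sup_{0≤x≤1} |w̄(x) B̄n(f,x)| ≤ C sup_{0≤x≤1} |w̄(x) f(x)|. -/

import Mathlib

open Real Set MeasureTheory

/-- The weight `w̄(x) = |x - ξ|^α`. -/
noncomputable def wbar (ξ α : ℝ) (x : ℝ) : ℝ := |x - ξ| ^ α

/-- Sup of `|g|` over `[0,1]`. -/
noncomputable def supIcc (g : ℝ → ℝ) : ℝ := ⨆ x : Set.Icc (0:ℝ) 1, |g x|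

/-- The weighted sup norm `‖w̄ f‖ = sup_{0 ≤ x ≤ 1} |w̄(x) f(x)|`. -/
noncomputable def nrmCw (ξ α : ℝ) (f : ℝ → ℝ) : ℝ := supIcc fun x => wbar ξ α x * f x

/-- Membership in `C_{w̄}`: continuous on `[0,1] \ {ξ}` and `w̄ f → 0` at `ξ`. -/
def MemCw (ξ α : ℝ) (f : ℝ → ℝ) : Prop :=
  ContinuousOn f (Set.Icc (0:ℝ) 1 \ {ξ}) ∧
  Filter.Tendsto (fun x => wbar ξ α x * f x)
    (nhdsWithin ξ (Set.Icc (0:ℝ) 1 \ {ξ})) (nhds 0)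

/-- Bernstein basis polynomial `p_{n,k}(x) = C(n,k) x^k (1-x)^{n-k}`. -/
noncomputable def bern (n k : ℕ) (x : ℝ) : ℝ :=
  (n.choose k : ℝ) * x ^ k * (1 - x) ^ (n - k)

/-- Bernstein operator `B_n(f,x) = Σ_{k=0}^n f(k/n) p_{n,k}(x)`. -/
noncomputable def Bop (n : ℕ) (f : ℝ → ℝ) (x : ℝ) : ℝ :=
  ∑ k ∈ Finset.range (n + 1), f ((k : ℝ) / n) * bern n k x

/-- The smooth cut-off function ψ. -/
noncomputable def psi (x : ℝ) : ℝ :=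
  if x ≤ 0 then 0 else if 1 ≤ x then 1 else 10 * x ^ 3 - 15 * x ^ 4 + 6 * x ^ 5

noncomputable def X1 (ξ : ℝ) (n : ℕ) : ℝ := (⌊n * ξ - 2 * Real.sqrt n⌋ : ℝ) / n
noncomputable def X2 (ξ : ℝ) (n : ℕ) : ℝ := (⌊n * ξ - Real.sqrt n⌋ : ℝ) / n
noncomputable def X3 (ξ : ℝ) (n : ℕ) : ℝ := (⌊n * ξ + Real.sqrt n⌋ : ℝ) / n
noncomputable def X4 (ξ : ℝ) (n : ℕ) : ℝ := (⌊n * ξ + 2 * Real.sqrt n⌋ : ℝ) / n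

/-- `n` is large enough that `0 < x1 < x2 < x3 < x4 < 1`. -/
def GoodN (ξ : ℝ) (n : ℕ) : Prop :=
  0 < X1 ξ n ∧ X1 ξ n < X2 ξ n ∧ X2 ξ n < X3 ξ n ∧ X3 ξ n < X4 ξ n ∧ X4 ξ n < 1

noncomputable def psib1 (ξ : ℝ) (n : ℕ) (x : ℝ) : ℝ := psi ((x - X1 ξ n) / (X2 ξ n - X1 ξ n))
noncomputable def psib2 (ξ : ℝ) (n : ℕ) (x : ℝ) : ℝ := psi ((x - X3 ξ n) / (X4 ξ n - X3 ξ n))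

/-- The linear function `P(f,x)` through `(x1, f(x1))` and `(x4, f(x4))`. -/
noncomputable def Pl (ξ : ℝ) (n : ℕ) (f : ℝ → ℝ) (x : ℝ) : ℝ :=
  (x - X4 ξ n) / (X1 ξ n - X4 ξ n) * f (X1 ξ n) +
    (X1 ξ n - x) / (X1 ξ n - X4 ξ n) * f (X4 ξ n)

/-- `F̄_n(f,x) = f(x)(1 - ψ̄1(x) + ψ̄2(x)) + ψ̄1(x)(1 - ψ̄2(x)) P(f,x)`. -/
noncomputable def Fbar (ξ : ℝ) (n : ℕ) (f : ℝ → ℝ) (x : ℝ) : ℝ :=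
  f x * (1 - psib1 ξ n x + psib2 ξ n x) +
    psib1 ξ n x * (1 - psib2 ξ n x) * Pl ξ n f x

/-- The modified Bernstein operator `B̄_n(f,x) = B_n(F̄_n(f), x)`. -/
noncomputable def Bbar (ξ : ℝ) (n : ℕ) (f : ℝ → ℝ) (x : ℝ) : ℝ := Bop n (Fbar ξ n f) x

noncomputable def phi (x : ℝ) : ℝ := Real.sqrt (x * (1 - x))

noncomputable def deltaN (n : ℕ) (x : ℝ) : ℝ := phi x + 1 / Real.sqrt n

/-- `ρ` is an admissible step-weight with exponents `β0, β1` and comparison constant `C0`. -/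
def Admissible (ρ : ℝ → ℝ) (β0 β1 C0 : ℝ) : Prop :=
  1 ≤ C0 ∧ 0 ≤ β0 ∧ 0 ≤ β1 ∧
    ∀ x ∈ Set.Ioo (0:ℝ) 1,
      C0⁻¹ * (x ^ β0 * (1 - x) ^ β1) ≤ ρ x ∧ ρ x ≤ C0 * (x ^ β0 * (1 - x) ^ β1)

/-- The weighted sup norm `sup_{0<x<1} |w̄(x) w2(x) f''(x)|`, where `w2` is the
second-order weight (e.g. `ρ²` or `φ^{2λ}`). -/
noncomputable def nrm2 (ξ α : ℝ) (w2 f : ℝ → ℝ) : ℝ :=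
  ⨆ x : Set.Ioo (0:ℝ) 1, |wbar ξ α x * w2 x * deriv (deriv f) x|

/-- Membership in the weighted Sobolev-type class: `f ∈ C_{w̄}`, `f` differentiable on
`(0,1)` with `f'` locally absolutely continuous there (encoded by the fundamental
theorem of calculus for `f'`), and `‖w̄ · w2 · f''‖ < ∞`. -/
def MemW2 (ξ α : ℝ) (w2 : ℝ → ℝ) (f : ℝ → ℝ) : Prop :=
  MemCw ξ α f ∧
  (∀ x ∈ Set.Ioo (0:ℝ) 1, DifferentiableAt ℝ f x) ∧
  (∀ a ∈ Set.Ioo (0:ℝ) 1, ∀ b ∈ Set.Ioo (0:ℝ) 1,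
    deriv f b - deriv f a = ∫ t in a..b, deriv (deriv f) t) ∧
  BddAbove (Set.range fun x : Set.Ioo (0:ℝ) 1 =>
    |wbar ξ α x * w2 x * deriv (deriv f) x|)

/-- The weighted modulus of smoothness `ω²_ρ(f,t)_{w̄}`. -/
noncomputable def omega2 (ξ α : ℝ) (ρ f : ℝ → ℝ) (t : ℝ) : ℝ :=
  sSup {y : ℝ | ∃ h x : ℝ, 0 < h ∧ h ≤ t ∧ x ∈ Set.Icc (0:ℝ) 1 ∧
    x + h * ρ x ∈ Set.Icc (0:ℝ) 1 ∧ x - h * ρ x ∈ Set.Icc (0:ℝ) 1 ∧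
    y = |wbar ξ α x * (f (x + h * ρ x) - 2 * f x + f (x - h * ρ x))|}

lemma bern_nonneg {n k : ℕ} {x : ℝ} (hx : x ∈ Set.Icc (0:ℝ) 1) : 0 ≤ bern n k x := by
  have h1 : (0:ℝ) ≤ x := hx.1
  have h2 : (0:ℝ) ≤ 1 - x := by linarith [hx.2]
  exact mul_nonneg (mul_nonneg (by positivity) (pow_nonneg h1 _)) (pow_nonneg h2 _)

lemma bern_sum (n : ℕ) (x : ℝ) : ∑ k ∈ Finset.range (n+1), bern n k x = 1 := by
  have := add_pow x (1-x) n
  simp only [add_sub_cancel, one_pow] at this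
  rw [show (1:ℝ) = (x + (1-x))^n by rw [add_sub_cancel]; exact (one_pow n).symm]
  rw [add_pow]
  exact Finset.sum_congr rfl fun k _ => by unfold bern; ring

lemma bern_zero_right (n : ℕ) {k : ℕ} (h : n < k) (x : ℝ) : bern n k x = 0 := by
  unfold bern; rw [Nat.choose_eq_zero_of_lt h]; simp

lemma bern_succ_zero (n : ℕ) (x : ℝ) : bern (n+1) 0 x = (1-x) * bern n 0 x := by
  unfold bern; simp [pow_succ]; ring

lemma bern_succ_succ (n k : ℕ) (x : ℝ) :
    bern (n+1) (k+1) x = x * bern n k x + (1-x) * bern n (k+1) x := by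
  unfold bern
  rcases lt_or_ge k n with h | h
  · have h1 : n - k = (n - (k+1)) + 1 := by omega
    have h2 : (n+1) - (k+1) = (n - (k+1)) + 1 := by omega
    rw [Nat.choose_succ_succ, h1, h2]
    push_cast
    ring
  · rcases eq_or_lt_of_le h with rfl | h'
    · have : n - (n+1) = 0 := by omega
      simp [Nat.choose_succ_succ, Nat.choose_eq_zero_of_lt (Nat.lt_succ_self n), Nat.sub_self, this]
      ring
    · rw [Nat.choose_eq_zero_of_lt h', Nat.choose_eq_zero_of_lt (by omega),
        Nat.choose_eq_zero_of_lt (by omega)]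
      simp

lemma bern_shift (n : ℕ) (x : ℝ) (g : ℕ → ℝ) :
    ∑ k ∈ Finset.range (n+2), g k * bern (n+1) k x
      = ∑ k ∈ Finset.range (n+1), (x * g (k+1) + (1-x) * g k) * bern n k x := by
  rw [Finset.sum_range_succ' (fun k => g k * bern (n+1) k x) (n+1)]
  simp only [bern_succ_succ, bern_succ_zero]
  have h1 : ∑ k ∈ Finset.range (n+1), g (k+1) * (x * bern n k x + (1-x) * bern n (k+1) x)
      = (∑ k ∈ Finset.range (n+1), x * g (k+1) * bern n k x)
        + ∑ k ∈ Finset.range (n+1), (1-x) * g (k+1) * bern n (k+1) x := by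
    rw [← Finset.sum_add_distrib]; exact Finset.sum_congr rfl fun k _ => by ring
  rw [h1]
  have h2 : (∑ k ∈ Finset.range (n+1), (1-x) * g (k+1) * bern n (k+1) x)
      + g 0 * ((1-x) * bern n 0 x)
      = ∑ k ∈ Finset.range (n+1), (1-x) * g k * bern n k x := by
    have e1 := Finset.sum_range_succ' (fun k => (1-x) * g k * bern n k x) (n+1)
    have e2 := Finset.sum_range_succ (fun k => (1-x) * g k * bern n k x) (n+1)
    rw [bern_zero_right n (Nat.lt_succ_self n)] at e2
    simp only [mul_zero] at e2
    rw [e2, add_zero] at e1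
    linarith [e1]
  rw [add_assoc, h2, ← Finset.sum_add_distrib]
  exact Finset.sum_congr rfl fun k _ => by ring

lemma key_ineq (M' : ℕ) (x z : ℝ) (hx0 : 0 ≤ x) (hx1 : x ≤ 1) :
    x*(z+(1-x))^(2*M'+2) + (1-x)*(z-x)^(2*M'+2)
      ≤ z^(2*M'+2) + 2*4^(M'+1)*(1 + z^(2*M')) := by
  have ha0 : (0:ℝ) ≤ 1 - x := by linarith
  have ha1 : (1:ℝ) - x ≤ 1 := by linarith
  have hz2 : (0:ℝ) ≤ z^(2*M') := by rw [pow_mul]; positivity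
  set N := 2*M'+2 with hN
  have expand : x*(z+(1-x))^N + (1-x)*(z-x)^N
      = ∑ j ∈ Finset.range (N+1),
          (x*(1-x)^(N-j) + (1-x)*(-x)^(N-j)) * z^j * ((N.choose j : ℕ) : ℝ) := by
    rw [show z - x = z + (-x) by ring, add_pow, add_pow, Finset.mul_sum, Finset.mul_sum,
      ← Finset.sum_add_distrib]
    exact Finset.sum_congr rfl fun j _ => by ring
  rw [expand]
  have hsplit : Finset.range (N+1) = Finset.range (2*M'+1+1+1) := by rw [hN]
  rw [hsplit, Finset.sum_range_succ, Finset.sum_range_succ]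
  have hlast : (x*(1-x)^(N-(2*M'+1+1)) + (1-x)*(-x)^(N-(2*M'+1+1))) * z^(2*M'+1+1)
      * ((N.choose (2*M'+1+1) : ℕ) : ℝ) = z^(2*M'+2) := by
    have e0 : N - (2*M'+1+1) = 0 := by omega
    have e1 : N.choose (2*M'+1+1) = 1 := by
      rw [show 2*M'+1+1 = N by omega, Nat.choose_self]
    rw [e0, e1]; push_cast; ring
  have hpen : (x*(1-x)^(N-(2*M'+1)) + (1-x)*(-x)^(N-(2*M'+1))) * z^(2*M'+1)
      * ((N.choose (2*M'+1) : ℕ) : ℝ) = 0 := by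
    have e0 : N - (2*M'+1) = 1 := by omega
    rw [e0]; ring
  rw [hlast, hpen, add_zero]
  have hrest : ∑ j ∈ Finset.range (2*M'+1),
      (x*(1-x)^(N-j) + (1-x)*(-x)^(N-j)) * z^j * ((N.choose j : ℕ) : ℝ)
      ≤ 2*4^(M'+1)*(1 + z^(2*M')) := by
    have step : ∀ j ∈ Finset.range (2*M'+1),
        (x*(1-x)^(N-j) + (1-x)*(-x)^(N-j)) * z^j * ((N.choose j : ℕ) : ℝ)
          ≤ (2*(1 + z^(2*M'))) * ((N.choose j : ℕ) : ℝ) := by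
      intro j hj
      have hj' : j ≤ 2*M' := by
        have := Finset.mem_range.mp hj; omega
      have hC : (0:ℝ) ≤ ((N.choose j : ℕ) : ℝ) := Nat.cast_nonneg _
      have habs : |x*(1-x)^(N-j) + (1-x)*(-x)^(N-j)| ≤ 2 := by
        refine (abs_add_le _ _).trans ?_
        rw [abs_mul, abs_mul, abs_pow, abs_pow, abs_of_nonneg hx0, abs_of_nonneg ha0,
          abs_neg, abs_of_nonneg hx0]
        have b1 : x * (1-x)^(N-j) ≤ 1 :=
          mul_le_one₀ hx1 (pow_nonneg ha0 _) (pow_le_one₀ ha0 ha1)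
        have b2 : (1-x) * x^(N-j) ≤ 1 :=
          mul_le_one₀ ha1 (pow_nonneg hx0 _) (pow_le_one₀ hx0 hx1)
        have : (0:ℝ) ≤ x * (1-x)^(N-j) := mul_nonneg hx0 (pow_nonneg ha0 _)
        have : (0:ℝ) ≤ (1-x) * x^(N-j) := mul_nonneg ha0 (pow_nonneg hx0 _)
        linarith
      have hzj : |z|^j ≤ 1 + z^(2*M') := by
        rcases le_or_gt |z| 1 with h | h
        · have := pow_le_one₀ (abs_nonneg z) h (n := j); linarith
        · have h1 : |z|^j ≤ |z|^(2*M') := pow_le_pow_right₀ h.le hj'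
          have h2 : |z|^(2*M') = z^(2*M') := by
            rw [← abs_pow, abs_of_nonneg hz2]
          linarith
      calc (x*(1-x)^(N-j) + (1-x)*(-x)^(N-j)) * z^j * ((N.choose j : ℕ) : ℝ)
          ≤ |(x*(1-x)^(N-j) + (1-x)*(-x)^(N-j)) * z^j * ((N.choose j : ℕ) : ℝ)| :=
            le_abs_self _
        _ = |x*(1-x)^(N-j) + (1-x)*(-x)^(N-j)| * |z|^j * ((N.choose j : ℕ) : ℝ) := by
            rw [abs_mul, abs_mul, abs_pow, Nat.abs_cast]
        _ ≤ 2 * (1 + z^(2*M')) * ((N.choose j : ℕ) : ℝ) := by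
            have h1 : (0:ℝ) ≤ 1 + z^(2*M') := by linarith
            have h2 : (0:ℝ) ≤ |z|^j := pow_nonneg (abs_nonneg _) _
            apply mul_le_mul_of_nonneg_right _ hC
            calc |x*(1-x)^(N-j) + (1-x)*(-x)^(N-j)| * |z|^j
                ≤ 2 * |z|^j := mul_le_mul_of_nonneg_right habs h2
              _ ≤ 2 * (1 + z^(2*M')) := by linarith
        _ = (2*(1 + z^(2*M'))) * ((N.choose j : ℕ) : ℝ) := by ring
    calc ∑ j ∈ Finset.range (2*M'+1),
        (x*(1-x)^(N-j) + (1-x)*(-x)^(N-j)) * z^j * ((N.choose j : ℕ) : ℝ)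
        ≤ ∑ j ∈ Finset.range (2*M'+1), (2*(1 + z^(2*M'))) * ((N.choose j : ℕ) : ℝ) :=
          Finset.sum_le_sum step
      _ = (2*(1 + z^(2*M'))) * ∑ j ∈ Finset.range (2*M'+1), ((N.choose j : ℕ) : ℝ) := by
          rw [Finset.mul_sum]
      _ ≤ (2*(1 + z^(2*M'))) * 4^(M'+1) := by
          apply mul_le_mul_of_nonneg_left _ (by positivity)
          have h1 : ∑ j ∈ Finset.range (2*M'+1), ((N.choose j : ℕ) : ℝ)
              ≤ ∑ j ∈ Finset.range (N+1), ((N.choose j : ℕ) : ℝ) := by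
            apply Finset.sum_le_sum_of_subset_of_nonneg
            · exact Finset.range_subset_range.mpr (by omega)
            · intro i _ _; exact Nat.cast_nonneg _
          have h2 : ∑ j ∈ Finset.range (N+1), ((N.choose j : ℕ) : ℝ) = 4^(M'+1) := by
            rw [← Nat.cast_sum]
            rw [Nat.sum_range_choose]
            rw [show N = 2*(M'+1) by omega, pow_mul]
            norm_num
          linarith
      _ = 2*4^(M'+1)*(1 + z^(2*M')) := by ring
  linarith

lemma moment_bound (m : ℕ) : ∃ C : ℝ, 1 ≤ C ∧ ∀ n : ℕ, ∀ x ∈ Set.Icc (0:ℝ) 1,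
    (∑ k ∈ Finset.range (n+1), ((k:ℝ) - n*x)^(2*m) * bern n k x) ≤ C * (n:ℝ)^m := by
  induction m with
  | zero =>
    refine ⟨1, le_refl 1, fun n x hx => ?_⟩
    simp only [mul_zero, pow_zero, one_mul, bern_sum, le_refl]
  | succ m ih =>
    obtain ⟨C, hC1, hC⟩ := ih
    have h41 : (1:ℝ) ≤ 4^(m+1) := one_le_pow₀ (by norm_num)
    refine ⟨2*4^(m+1)*(1+C), by nlinarith, ?_⟩
    set C' := 2*4^(m+1)*(1+C) with hC'
    intro n
    induction n with
    | zero =>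
      intro x hx
      rw [Finset.sum_range_one]
      norm_num
    | succ n ihn =>
      intro x hx
      have hx0 := hx.1
      have hx1 := hx.2
      have hshift := bern_shift n x (fun k => ((k:ℝ) - (n+1)*x)^(2*(m+1)))
      have e1 : ∑ k ∈ Finset.range (n+1+1), ((k:ℝ) - (n+1:ℕ)*x)^(2*(m+1)) * bern (n+1) k x
          = ∑ k ∈ Finset.range (n+1),
              (x * (((k:ℝ)+1) - (n+1)*x)^(2*(m+1)) + (1-x) * ((k:ℝ) - (n+1)*x)^(2*(m+1)))
                * bern n k x := by
        push_cast
        rw [show n+1+1 = n+2 from rfl] at *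
        convert hshift using 2 with k
        push_cast; ring_nf
      rw [e1]
      have hpt : ∀ k ∈ Finset.range (n+1),
          (x * (((k:ℝ)+1) - (n+1)*x)^(2*(m+1)) + (1-x) * ((k:ℝ) - (n+1)*x)^(2*(m+1)))
              * bern n k x
          ≤ ((k:ℝ) - n*x)^(2*(m+1)) * bern n k x
            + (2*4^(m+1)) * bern n k x
            + (2*4^(m+1)) * (((k:ℝ) - n*x)^(2*m) * bern n k x) := by
        intro k hk
        have hb := bern_nonneg (n := n) (k := k) hx
        have hkey := key_ineq m x ((k:ℝ) - n*x) hx0 hx1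
        have e2 : ((k:ℝ)+1) - (n+1)*x = ((k:ℝ) - n*x) + (1-x) := by ring
        have e3 : ((k:ℝ)) - (n+1)*x = ((k:ℝ) - n*x) - x := by ring
        rw [e2, e3, show 2*(m+1) = 2*m+2 by omega]
        nlinarith [mul_le_mul_of_nonneg_right hkey hb]
      have hsum := Finset.sum_le_sum hpt
      rw [Finset.sum_add_distrib, Finset.sum_add_distrib, ← Finset.mul_sum, ← Finset.mul_sum,
        bern_sum, mul_one] at hsum
      have hA := ihn x hx
      have hB := hC n x hx
      have hc : (0:ℝ) ≤ 2*4^(m+1) := by positivity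
      have h5 := mul_le_mul_of_nonneg_left hB hc
      have hgrow : 2*4^(m+1) + 2*4^(m+1)*(C * (n:ℝ)^m)
          ≤ C' * (((n:ℝ)+1)^(m+1) - (n:ℝ)^(m+1)) := by
        rcases Nat.eq_zero_or_pos n with rfl | hn
        · simp only [Nat.cast_zero]
          have e6 : ((0:ℝ)+1)^(m+1) - (0:ℝ)^(m+1) = 1 := by
            rw [zero_add, one_pow, zero_pow (by omega)]; ring
          rw [e6, mul_one, hC']
          have h0m : (0:ℝ)^m ≤ 1 := by
            rcases Nat.eq_zero_or_pos m with rfl | hm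
            · norm_num
            · rw [zero_pow (by omega)]; norm_num
          have hmul : 2*4^(m+1)*(C*(0:ℝ)^m) ≤ 2*4^(m+1)*C := by
            have hcp : (0:ℝ) ≤ 2*4^(m+1)*C := by nlinarith
            nlinarith [mul_le_mul_of_nonneg_left h0m (show (0:ℝ) ≤ 2*4^(m+1)*C by nlinarith)]
          nlinarith [hmul]
        · have hn1 : (1:ℝ) ≤ (n:ℝ) := by exact_mod_cast hn
          have hnm : (1:ℝ) ≤ (n:ℝ)^m := one_le_pow₀ hn1
          have hstep : (n:ℝ)^m ≤ ((n:ℝ)+1)^(m+1) - (n:ℝ)^(m+1) := by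
            have hmono : ((n:ℝ))^m ≤ ((n:ℝ)+1)^m := by
              gcongr <;> linarith
            have h1 : ((n:ℝ)+1) * (n:ℝ)^m ≤ ((n:ℝ)+1)^(m+1) := by
              calc ((n:ℝ)+1) * (n:ℝ)^m ≤ ((n:ℝ)+1) * ((n:ℝ)+1)^m := by nlinarith
                _ = ((n:ℝ)+1)^(m+1) := by rw [pow_succ]; ring
            have h2 : ((n:ℝ)+1) * (n:ℝ)^m = (n:ℝ)^(m+1) + (n:ℝ)^m := by
              rw [pow_succ]; ring
            linarith
          have h6 : 2*4^(m+1) + 2*4^(m+1)*(C * (n:ℝ)^m) ≤ C' * (n:ℝ)^m := by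
            rw [hC']; nlinarith
          have h7 : C' * (n:ℝ)^m ≤ C' * (((n:ℝ)+1)^(m+1) - (n:ℝ)^(m+1)) := by
            apply mul_le_mul_of_nonneg_left hstep
            nlinarith
          linarith
      push_cast
      push_cast at hsum hA
      linarith

lemma psi_nonneg (x : ℝ) : 0 ≤ psi x := by
  unfold psi
  split_ifs with h1 h2
  · norm_num
  · norm_num
  · push_neg at h1 h2
    have h3 : (0:ℝ) ≤ 10 - 15*x + 6*x^2 := by nlinarith [sq_nonneg (4*x-5)]
    nlinarith [mul_nonneg (pow_nonneg h1.le 3) h3]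

lemma psi_le_one (x : ℝ) : psi x ≤ 1 := by
  unfold psi
  split_ifs with h1 h2
  · norm_num
  · norm_num
  · push_neg at h1 h2
    have h3 : (0:ℝ) ≤ 6*x^2+3*x+1 := by nlinarith [sq_nonneg x]
    nlinarith [mul_nonneg (pow_nonneg (show (0:ℝ) ≤ 1 - x by linarith) 3) h3]

lemma psi_of_nonpos {x : ℝ} (h : x ≤ 0) : psi x = 0 := by unfold psi; rw [if_pos h]

lemma psi_of_one_le {x : ℝ} (h : 1 ≤ x) : psi x = 1 := by
  unfold psi; rw [if_neg (by linarith), if_pos h]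


lemma memCw_bound {ξ α : ℝ} (hξ : ξ ∈ Set.Ioo (0:ℝ) 1) (hα : 0 < α) {f : ℝ → ℝ}
    (hf : MemCw ξ α f) :
    0 ≤ nrmCw ξ α f ∧ ∀ t ∈ Set.Icc (0:ℝ) 1, |wbar ξ α t * f t| ≤ nrmCw ξ α f := by
  have hwc : Continuous (wbar ξ α) := by
    rw [continuous_iff_continuousAt]
    intro t
    have h1 : ContinuousAt (fun y : ℝ => |y - ξ|) t := by fun_prop
    exact (Real.continuousAt_rpow_const _ _ (Or.inr hα.le)).comp h1
  have hgc : ContinuousOn (fun t => wbar ξ α t * f t) (Set.Icc 0 1) := by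
    intro t ht
    by_cases hne : t = ξ
    · subst hne
      have hv : wbar t α t * f t = 0 := by
        unfold wbar; rw [sub_self, abs_zero, Real.zero_rpow hα.ne', zero_mul]
      unfold ContinuousWithinAt
      beta_reduce
      rw [hv]
      have hmem : t ∈ Set.Icc (0:ℝ) 1 := ⟨hξ.1.le, hξ.2.le⟩
      have hsplit : Set.Icc (0:ℝ) 1 = (Set.Icc (0:ℝ) 1 \ {t}) ∪ {t} := by
        rw [Set.diff_union_self, Set.union_eq_self_of_subset_right
          (Set.singleton_subset_iff.mpr hmem)]
      rw [hsplit, nhdsWithin_union]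
      refine Filter.tendsto_sup.mpr ⟨hf.2, ?_⟩
      rw [nhdsWithin_singleton]
      have := tendsto_pure_nhds (fun u => wbar t α u * f u) t
      rwa [hv] at this
    · have hmem : Set.Icc (0:ℝ) 1 \ {ξ} ∈ nhdsWithin t (Set.Icc (0:ℝ) 1) := by
        rw [Set.diff_eq]
        exact Filter.inter_mem self_mem_nhdsWithin
          (mem_nhdsWithin_of_mem_nhds (isOpen_compl_singleton.mem_nhds hne))
      have h1 : ContinuousWithinAt f (Set.Icc (0:ℝ) 1) t :=
        (hf.1 t ⟨ht, hne⟩).mono_of_mem_nhdsWithin hmem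
      exact (hwc.continuousAt.continuousWithinAt).mul h1
  have hbdd : BddAbove (Set.range fun p : Set.Icc (0:ℝ) 1 => |wbar ξ α p * f p|) := by
    have h2 : BddAbove ((fun t => |wbar ξ α t * f t|) '' (Set.Icc (0:ℝ) 1)) :=
      (isCompact_Icc.image_of_continuousOn hgc.abs).bddAbove
    rwa [Set.image_eq_range] at h2
  constructor
  · exact (abs_nonneg _).trans (le_ciSup hbdd ⟨0, by norm_num⟩)
  · intro t ht
    exact le_ciSup hbdd ⟨t, ht⟩

set_option maxHeartbeats 2000000 in
/-- `‖w̄ B̄n(f)‖ ≤ C ‖w̄ f‖` for `f ∈ C_{w̄}`. -/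
theorem stmt14 (ξ α : ℝ) (hξ : ξ ∈ Set.Ioo (0:ℝ) 1) (hα : 0 < α) :
    ∃ C > 0, ∃ N : ℕ, ∀ f : ℝ → ℝ, MemCw ξ α f →
      ∀ n : ℕ, N ≤ n → GoodN ξ n →
        nrmCw ξ α (fun x => Bbar ξ n f x) ≤ C * nrmCw ξ α f := by
  obtain ⟨hξ0, hξ1⟩ := hξ
  set m := ⌈α⌉₊ with hmdef
  have hm0 : 0 < m := Nat.ceil_pos.mpr hα
  have hαm : α ≤ (m:ℝ) := Nat.le_ceil α
  obtain ⟨CK, hCK1, hCK⟩ := moment_bound m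
  have h14 : (0:ℝ) < (14:ℝ)^α := Real.rpow_pos_of_pos (by norm_num) α
  have h2a : (0:ℝ) < (2:ℝ)^α := Real.rpow_pos_of_pos (by norm_num) α
  have h4m : (0:ℝ) < (4:ℝ)^m := by positivity
  have hCK0 : (0:ℝ) ≤ CK := by linarith
  have hprod : (0:ℝ) ≤ 2*(2:ℝ)^α*(4:ℝ)^m*CK := by
    apply mul_nonneg _ hCK0
    apply mul_nonneg _ h4m.le
    apply mul_nonneg (by norm_num) h2a.le
  refine ⟨(14:ℝ)^α + (2:ℝ)^α + 2*(2:ℝ)^α*(4:ℝ)^m*CK + 1, by nlinarith, 4, ?_⟩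
  intro f hf n hn hgood
  obtain ⟨hg1, hg2, hg3, hg4, hg5⟩ := hgood
  obtain ⟨hL0, hL⟩ := memCw_bound ⟨hξ0, hξ1⟩ hα hf
  set L := nrmCw ξ α f with hLdef
  have hnR : (0:ℝ) < (n:ℝ) := by
    have : (0:ℕ) < n := by omega
    exact_mod_cast this
  set s := Real.sqrt (n:ℝ) with hsdef
  have hs0 : 0 < s := Real.sqrt_pos.mpr hnR
  have hss : s * s = (n:ℝ) := Real.mul_self_sqrt hnR.le
  have hs2 : 2 ≤ s := by
    have h4 : (4:ℝ) ≤ (n:ℝ) := by exact_mod_cast hn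
    have h5 : Real.sqrt 4 ≤ s := by rw [hsdef]; exact Real.sqrt_le_sqrt h4
    rwa [show (4:ℝ) = 2^2 by norm_num, Real.sqrt_sq (by norm_num : (0:ℝ) ≤ 2)] at h5
  -- X bounds
  have hX1l : ξ - 3/s ≤ X1 ξ n := by
    unfold X1
    rw [le_div_iff₀ hnR]
    have h := Int.sub_one_lt_floor ((n:ℝ)*ξ - 2*Real.sqrt n)
    rw [← hsdef] at h ⊢
    have e : (ξ - 3/s)*(n:ℝ) = (n:ℝ)*ξ - 3*s := by
      rw [← hss]; field_simp
    rw [e]; linarith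
  have hX1u : X1 ξ n ≤ ξ - 2/s := by
    unfold X1
    rw [div_le_iff₀ hnR]
    have h := Int.floor_le ((n:ℝ)*ξ - 2*Real.sqrt n)
    rw [← hsdef] at h ⊢
    have e : (ξ - 2/s)*(n:ℝ) = (n:ℝ)*ξ - 2*s := by
      rw [← hss]; field_simp
    rw [e]; linarith
  have hX2u : X2 ξ n ≤ ξ - (2*s)⁻¹ := by
    unfold X2
    rw [div_le_iff₀ hnR]
    have h := Int.floor_le ((n:ℝ)*ξ - Real.sqrt n)
    rw [← hsdef] at h ⊢
    have e : (ξ - (2*s)⁻¹)*(n:ℝ) = (n:ℝ)*ξ - s/2 := by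
      rw [← hss]; field_simp
    rw [e]; linarith
  have hX3l : ξ + (2*s)⁻¹ ≤ X3 ξ n := by
    unfold X3
    rw [le_div_iff₀ hnR]
    have h := Int.sub_one_lt_floor ((n:ℝ)*ξ + Real.sqrt n)
    rw [← hsdef] at h ⊢
    have e : (ξ + (2*s)⁻¹)*(n:ℝ) = (n:ℝ)*ξ + s/2 := by
      rw [← hss]; field_simp
    rw [e]; linarith
  have hX4l : ξ + (2*s)⁻¹ ≤ X4 ξ n := by
    unfold X4
    rw [le_div_iff₀ hnR]
    have h := Int.sub_one_lt_floor ((n:ℝ)*ξ + 2*Real.sqrt n)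
    rw [← hsdef] at h ⊢
    have e : (ξ + (2*s)⁻¹)*(n:ℝ) = (n:ℝ)*ξ + s/2 := by
      rw [← hss]; field_simp
    rw [e]; linarith
  have hX4u : X4 ξ n ≤ ξ + 3/s := by
    unfold X4
    rw [div_le_iff₀ hnR]
    have h := Int.floor_le ((n:ℝ)*ξ + 2*Real.sqrt n)
    rw [← hsdef] at h ⊢
    have e : (ξ + 3/s)*(n:ℝ) = (n:ℝ)*ξ + 3*s := by
      rw [← hss]; field_simp
    rw [e]; linarith
  have hhalf : (2*s)⁻¹ ≤ 2/s := by
    rw [inv_eq_one_div, div_le_div_iff₀ (by positivity) hs0]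
    nlinarith
  -- psi region facts
  have h21 : (0:ℝ) < X2 ξ n - X1 ξ n := sub_pos.mpr hg2
  have h43 : (0:ℝ) < X4 ξ n - X3 ξ n := sub_pos.mpr hg4
  have hpsib1_zero : ∀ t : ℝ, t ≤ X1 ξ n → psib1 ξ n t = 0 := by
    intro t h
    apply psi_of_nonpos
    exact div_nonpos_of_nonpos_of_nonneg (by linarith) h21.le
  have hpsib1_one : ∀ t : ℝ, X2 ξ n ≤ t → psib1 ξ n t = 1 := by
    intro t h
    apply psi_of_one_le
    rw [one_le_div h21]; linarith
  have hpsib2_zero : ∀ t : ℝ, t ≤ X3 ξ n → psib2 ξ n t = 0 := by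
    intro t h
    apply psi_of_nonpos
    exact div_nonpos_of_nonpos_of_nonneg (by linarith) h43.le
  have hpsib2_one : ∀ t : ℝ, X4 ξ n ≤ t → psib2 ξ n t = 1 := by
    intro t h
    apply psi_of_one_le
    rw [one_le_div h43]; linarith
  have hpsib1_pos : ∀ t : ℝ, 0 < psib1 ξ n t → X1 ξ n < t := by
    intro t h
    by_contra hc; push_neg at hc
    rw [hpsib1_zero t hc] at h; exact lt_irrefl _ h
  have hpsib2_lt1 : ∀ t : ℝ, psib2 ξ n t < 1 → t < X4 ξ n := by
    intro t h
    by_contra hc; push_neg at hc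
    rw [hpsib2_one t hc] at h; exact lt_irrefl _ h
  -- |f| bound from the norm
  have hwnn : ∀ y : ℝ, 0 ≤ wbar ξ α y := fun y => Real.rpow_nonneg (abs_nonneg _) α
  have hfb : ∀ t ∈ Set.Icc (0:ℝ) 1, ∀ c : ℝ, 0 < c → c⁻¹ ≤ |t - ξ| → |f t| ≤ L * c^α := by
    intro t ht c hc hdist
    have hca : (0:ℝ) < c^α := Real.rpow_pos_of_pos hc α
    have hw1 : (c^α)⁻¹ ≤ wbar ξ α t := by
      rw [← Real.inv_rpow hc.le]
      exact Real.rpow_le_rpow (by positivity) hdist hα.le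
    have h2 : wbar ξ α t * |f t| ≤ L := by
      have h3 := hL t ht
      rwa [abs_mul, abs_of_nonneg (hwnn t)] at h3
    calc |f t| = (c^α)⁻¹ * |f t| * c^α := by field_simp
      _ ≤ (wbar ξ α t * |f t|) * c^α := by
          apply mul_le_mul_of_nonneg_right _ hca.le
          exact mul_le_mul_of_nonneg_right hw1 (abs_nonneg _)
      _ ≤ L * c^α := mul_le_mul_of_nonneg_right h2 hca.le
  have hX1X4 : X1 ξ n < X4 ξ n := by linarith
  have hX1mem : X1 ξ n ∈ Set.Icc (0:ℝ) 1 := ⟨hg1.le, by linarith⟩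
  have hX4mem : X4 ξ n ∈ Set.Icc (0:ℝ) 1 := ⟨by linarith, hg5.le⟩
  have h2s0 : (0:ℝ) < 2*s := by positivity
  have hfX1 : |f (X1 ξ n)| ≤ L * (2*s)^α := by
    apply hfb _ hX1mem (2*s) h2s0
    have h1 : (2*s)⁻¹ ≤ ξ - X1 ξ n := by linarith
    have h2 := neg_le_abs (X1 ξ n - ξ)
    linarith
  have hfX4 : |f (X4 ξ n)| ≤ L * (2*s)^α := by
    apply hfb _ hX4mem (2*s) h2s0
    have h1 : (2*s)⁻¹ ≤ X4 ξ n - ξ := by linarith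
    have h2 := le_abs_self (X4 ξ n - ξ)
    linarith
  have hG0 : (0:ℝ) ≤ L * (2*s)^α := mul_nonneg hL0 (Real.rpow_nonneg h2s0.le α)
  -- bound for Pl on [X1, X4]
  have hPb : ∀ t : ℝ, X1 ξ n ≤ t → t ≤ X4 ξ n → |Pl ξ n f t| ≤ L * (2*s)^α := by
    intro t h1 h4
    have h14' : X1 ξ n - X4 ξ n ≠ 0 := by linarith
    have h41 : (0:ℝ) < X4 ξ n - X1 ξ n := by linarith
    have hlam0 : 0 ≤ (t - X4 ξ n)/(X1 ξ n - X4 ξ n) := by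
      rw [show (t - X4 ξ n)/(X1 ξ n - X4 ξ n) = (X4 ξ n - t)/(X4 ξ n - X1 ξ n) by
        rw [div_eq_div_iff h14' (by linarith)]; ring]
      exact div_nonneg (by linarith) h41.le
    have hmu0 : 0 ≤ (X1 ξ n - t)/(X1 ξ n - X4 ξ n) := by
      rw [show (X1 ξ n - t)/(X1 ξ n - X4 ξ n) = (t - X1 ξ n)/(X4 ξ n - X1 ξ n) by
        rw [div_eq_div_iff h14' (by linarith)]; ring]
      exact div_nonneg (by linarith) h41.le
    have hsum : (t - X4 ξ n)/(X1 ξ n - X4 ξ n) + (X1 ξ n - t)/(X1 ξ n - X4 ξ n) = 1 := by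
      field_simp; ring
    unfold Pl
    calc |(t - X4 ξ n)/(X1 ξ n - X4 ξ n) * f (X1 ξ n) +
          (X1 ξ n - t)/(X1 ξ n - X4 ξ n) * f (X4 ξ n)|
        ≤ |(t - X4 ξ n)/(X1 ξ n - X4 ξ n) * f (X1 ξ n)| +
          |(X1 ξ n - t)/(X1 ξ n - X4 ξ n) * f (X4 ξ n)| := abs_add_le _ _
      _ = (t - X4 ξ n)/(X1 ξ n - X4 ξ n) * |f (X1 ξ n)| +
          (X1 ξ n - t)/(X1 ξ n - X4 ξ n) * |f (X4 ξ n)| := by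
          rw [abs_mul, abs_mul, abs_of_nonneg hlam0, abs_of_nonneg hmu0]
      _ ≤ (t - X4 ξ n)/(X1 ξ n - X4 ξ n) * (L * (2*s)^α) +
          (X1 ξ n - t)/(X1 ξ n - X4 ξ n) * (L * (2*s)^α) := by
          apply add_le_add
          · exact mul_le_mul_of_nonneg_left hfX1 hlam0
          · exact mul_le_mul_of_nonneg_left hfX4 hmu0
      _ = L * (2*s)^α := by rw [← add_mul, hsum, one_mul]
  -- decomposition of Fbar
  have hdecomp : ∀ t ∈ Set.Icc (0:ℝ) 1, ∃ θ : ℝ, 0 ≤ θ ∧ θ ≤ 1 ∧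
      |Fbar ξ n f t| ≤ θ * |f t| + (1-θ) * (L*(2*s)^α) ∧
      (0 < θ → (2*s)⁻¹ ≤ |t - ξ|) ∧
      (θ < 1 → X1 ξ n < t ∧ t < X4 ξ n) := by
    intro t ht
    have hψ1nn : 0 ≤ psib1 ξ n t := psi_nonneg _
    have hψ1le : psib1 ξ n t ≤ 1 := psi_le_one _
    have hψ2nn : 0 ≤ psib2 ξ n t := psi_nonneg _
    have hψ2le : psib2 ξ n t ≤ 1 := psi_le_one _
    rcases lt_or_ge t (X2 ξ n) with h2 | h2
    · -- t < X2
      have hψ2z : psib2 ξ n t = 0 := hpsib2_zero t (by linarith)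
      refine ⟨1 - psib1 ξ n t, by linarith, by linarith, ?_, ?_, ?_⟩
      · have hPψ : psib1 ξ n t * |Pl ξ n f t| ≤ psib1 ξ n t * (L * (2*s)^α) := by
          rcases eq_or_lt_of_le hψ1nn with he | hlt
          · rw [← he, zero_mul, zero_mul]
          · exact mul_le_mul_of_nonneg_left
              (hPb t (hpsib1_pos t hlt).le (by linarith)) hψ1nn
        have e : Fbar ξ n f t = f t * (1 - psib1 ξ n t) + psib1 ξ n t * Pl ξ n f t := by
          unfold Fbar; rw [hψ2z]; ring
        rw [e]
        calc |f t * (1 - psib1 ξ n t) + psib1 ξ n t * Pl ξ n f t|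
            ≤ |f t * (1 - psib1 ξ n t)| + |psib1 ξ n t * Pl ξ n f t| := abs_add_le _ _
          _ = (1 - psib1 ξ n t) * |f t| + psib1 ξ n t * |Pl ξ n f t| := by
              rw [abs_mul, abs_mul, abs_of_nonneg (by linarith : (0:ℝ) ≤ 1 - psib1 ξ n t),
                abs_of_nonneg hψ1nn]; ring
          _ ≤ (1 - psib1 ξ n t) * |f t| + psib1 ξ n t * (L * (2*s)^α) := by linarith
          _ = (1 - psib1 ξ n t) * |f t| +
              (1 - (1 - psib1 ξ n t)) * (L * (2*s)^α) := by ring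
      · intro _
        have h3 := neg_le_abs (t - ξ)
        have : (2*s)⁻¹ ≤ ξ - t := by linarith
        linarith
      · intro hθ
        have hψp : 0 < psib1 ξ n t := by linarith
        exact ⟨hpsib1_pos t hψp, by linarith⟩
    · rcases le_or_gt t (X3 ξ n) with h3 | h3
      · -- X2 ≤ t ≤ X3
        have hψ1o : psib1 ξ n t = 1 := hpsib1_one t h2
        have hψ2z : psib2 ξ n t = 0 := hpsib2_zero t h3
        refine ⟨0, le_refl 0, zero_le_one, ?_, fun h => absurd h (lt_irrefl 0), ?_⟩
        · have e : Fbar ξ n f t = Pl ξ n f t := by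
            unfold Fbar; rw [hψ1o, hψ2z]; ring
          rw [e, zero_mul, zero_add, sub_zero, one_mul]
          exact hPb t (by linarith) (by linarith)
        · intro _
          exact ⟨by linarith, by linarith⟩
      · -- X3 < t
        have hψ1o : psib1 ξ n t = 1 := hpsib1_one t (by linarith)
        refine ⟨psib2 ξ n t, hψ2nn, hψ2le, ?_, ?_, ?_⟩
        · have hPψ : (1 - psib2 ξ n t) * |Pl ξ n f t|
              ≤ (1 - psib2 ξ n t) * (L * (2*s)^α) := by
            rcases eq_or_lt_of_le hψ2le with he | hlt
            · rw [he, sub_self, zero_mul, zero_mul]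
            · exact mul_le_mul_of_nonneg_left
                (hPb t (by linarith) (hpsib2_lt1 t hlt).le) (by linarith)
          have e : Fbar ξ n f t = f t * psib2 ξ n t + (1 - psib2 ξ n t) * Pl ξ n f t := by
            unfold Fbar; rw [hψ1o]; ring
          rw [e]
          calc |f t * psib2 ξ n t + (1 - psib2 ξ n t) * Pl ξ n f t|
              ≤ |f t * psib2 ξ n t| + |(1 - psib2 ξ n t) * Pl ξ n f t| := abs_add_le _ _
            _ = psib2 ξ n t * |f t| + (1 - psib2 ξ n t) * |Pl ξ n f t| := by
                rw [abs_mul, abs_mul, abs_of_nonneg hψ2nn,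
                  abs_of_nonneg (by linarith : (0:ℝ) ≤ 1 - psib2 ξ n t)]; ring
            _ ≤ psib2 ξ n t * |f t| + (1 - psib2 ξ n t) * (L * (2*s)^α) := by linarith
        · intro _
          have h4 := le_abs_self (t - ξ)
          have : (2*s)⁻¹ ≤ t - ξ := by linarith
          linarith
        · intro hθ
          exact ⟨by linarith, hpsib2_lt1 t hθ⟩
  -- pass to the sup
  have hne : Nonempty (Set.Icc (0:ℝ) 1) := ⟨⟨0, by norm_num [Set.mem_Icc]⟩⟩
  show nrmCw ξ α (fun x => Bbar ξ n f x) ≤ _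
  unfold nrmCw supIcc
  apply ciSup_le
  rintro ⟨x, hx⟩
  simp only
  rw [abs_mul, abs_of_nonneg (hwnn x)]
  have htk : ∀ k ∈ Finset.range (n+1), (k:ℝ)/n ∈ Set.Icc (0:ℝ) 1 := by
    intro k hk
    have hkn : k ≤ n := by have := Finset.mem_range.mp hk; omega
    constructor
    · positivity
    · rw [div_le_one hnR]; exact_mod_cast hkn
  have hBabs : |Bbar ξ n f x| ≤
      ∑ k ∈ Finset.range (n+1), |Fbar ξ n f ((k:ℝ)/n)| * bern n k x := by
    unfold Bbar Bop
    refine (Finset.abs_sum_le_sum_abs _ _).trans ?_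
    apply Finset.sum_le_sum
    intro k hk
    rw [abs_mul, abs_of_nonneg (bern_nonneg hx)]
  set d := |x - ξ| with hd
  have hd00 : 0 ≤ d := abs_nonneg _
  have hwd : wbar ξ α x = d ^ α := by rw [hd]; rfl
  have hwx : wbar ξ α x * |Bbar ξ n f x| ≤
      wbar ξ α x * ∑ k ∈ Finset.range (n+1), |Fbar ξ n f ((k:ℝ)/n)| * bern n k x :=
    mul_le_mul_of_nonneg_left hBabs (hwnn x)
  rcases le_or_gt (d * s) 7 with hsm | hbg
  · -- small case
    have hdb : d ≤ 7/s := by rw [le_div_iff₀ hs0]; linarith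
    have hwxb : wbar ξ α x ≤ (7/s)^α := by
      rw [hwd]; exact Real.rpow_le_rpow hd00 hdb hα.le
    have hperk : ∀ k ∈ Finset.range (n+1), |Fbar ξ n f ((k:ℝ)/n)| ≤ L * (2*s)^α := by
      intro k hk
      obtain ⟨θ, hθ0, hθ1, hFb, hreg, _⟩ := hdecomp _ (htk k hk)
      have hθf : θ * |f ((k:ℝ)/n)| ≤ θ * (L * (2*s)^α) := by
        rcases eq_or_lt_of_le hθ0 with he | hθp
        · rw [← he, zero_mul, zero_mul]
        · exact mul_le_mul_of_nonneg_left
            (hfb _ (htk k hk) (2*s) h2s0 (hreg hθp)) hθ0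
      calc |Fbar ξ n f ((k:ℝ)/n)| ≤ θ * |f ((k:ℝ)/n)| + (1-θ) * (L*(2*s)^α) := hFb
        _ ≤ θ * (L * (2*s)^α) + (1-θ) * (L*(2*s)^α) := by linarith
        _ = L * (2*s)^α := by ring
    have hsum : ∑ k ∈ Finset.range (n+1), |Fbar ξ n f ((k:ℝ)/n)| * bern n k x
        ≤ L * (2*s)^α := by
      calc ∑ k ∈ Finset.range (n+1), |Fbar ξ n f ((k:ℝ)/n)| * bern n k x
          ≤ ∑ k ∈ Finset.range (n+1), (L * (2*s)^α) * bern n k x :=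
            Finset.sum_le_sum fun k hk =>
              mul_le_mul_of_nonneg_right (hperk k hk) (bern_nonneg hx)
        _ = L * (2*s)^α := by rw [← Finset.mul_sum, bern_sum, mul_one]
    have hsnn : (0:ℝ) ≤ ∑ k ∈ Finset.range (n+1), |Fbar ξ n f ((k:ℝ)/n)| * bern n k x :=
      Finset.sum_nonneg fun k hk => mul_nonneg (abs_nonneg _) (bern_nonneg hx)
    have h7s : (0:ℝ) ≤ (7/s)^α := Real.rpow_nonneg (by positivity) α
    have hfin : wbar ξ α x * ∑ k ∈ Finset.range (n+1),
        |Fbar ξ n f ((k:ℝ)/n)| * bern n k x ≤ (7/s)^α * (L * (2*s)^α) :=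
      mul_le_mul hwxb hsum hsnn h7s
    have hmulr : (7/s)^α * (2*s)^α = (14:ℝ)^α := by
      rw [← Real.mul_rpow (by positivity) h2s0.le]
      congr 1
      field_simp
      ring
    have hfin2 : (7/s)^α * (L * (2*s)^α) = (14:ℝ)^α * L := by
      rw [← hmulr]; ring
    rw [hfin2] at hfin
    have hC14 : (14:ℝ)^α * L ≤ ((14:ℝ)^α + (2:ℝ)^α + 2*(2:ℝ)^α*(4:ℝ)^m*CK + 1) * L := by
      apply mul_le_mul_of_nonneg_right _ hL0
      linarith only [h2a, hprod]
    linarith only [hwx, hfin, hC14]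
  · -- big case
    have hd0 : 0 < d := by nlinarith [hs0, hbg, hd00]
    have h2d0 : (0:ℝ) < 2/d := by positivity
    set Q := (2*s)^α * d^α * (2/d)^(2*m) with hQdef
    have hQ0 : 0 ≤ Q := by
      apply mul_nonneg (mul_nonneg (Real.rpow_nonneg h2s0.le α) (Real.rpow_nonneg hd00 α))
      exact pow_nonneg h2d0.le _
    have hev : ∀ y : ℝ, (0:ℝ) ≤ y^(2*m) := fun y => by rw [pow_mul]; positivity
    have hnear : ∀ t : ℝ, |t - ξ| < d/2 → 1 ≤ (2/d)^(2*m) * (t - x)^(2*m) := by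
      intro t hnr
      have h1 : d/2 ≤ |t - x| := by
        have h2 : |x - ξ| ≤ |x - t| + |t - ξ| := abs_sub_le x t ξ
        rw [abs_sub_comm x t] at h2
        rw [← hd] at h2
        linarith
      have h3 : (1:ℝ) ≤ (2/d) * |t - x| := by
        have h4 : (2/d) * (d/2) ≤ (2/d) * |t - x| :=
          mul_le_mul_of_nonneg_left h1 h2d0.le
        have h5 : (2/d) * (d/2) = 1 := by field_simp
        linarith
      calc (1:ℝ) = 1^(2*m) := (one_pow _).symm
        _ ≤ ((2/d) * |t - x|)^(2*m) := pow_le_pow_left₀ (by norm_num) h3 _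
        _ = (2/d)^(2*m) * |t - x|^(2*m) := mul_pow _ _ _
        _ = (2/d)^(2*m) * (t - x)^(2*m) := by
            rw [pow_abs, abs_of_nonneg (hev _)]
    have hperk : ∀ k ∈ Finset.range (n+1),
        wbar ξ α x * |Fbar ξ n f ((k:ℝ)/n)|
          ≤ L*(2:ℝ)^α + 2*L*Q*(((k:ℝ)/n) - x)^(2*m) := by
      intro k hk
      have ht := htk k hk
      obtain ⟨θ, hθ0, hθ1, hFb, hreg, hmid⟩ := hdecomp _ ht
      have hrhs1 : (0:ℝ) ≤ L*(2:ℝ)^α := mul_nonneg hL0 h2a.le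
      have hrhs2 : (0:ℝ) ≤ L*Q*(((k:ℝ)/n) - x)^(2*m) :=
        mul_nonneg (mul_nonneg hL0 hQ0) (hev _)
      have hda : (0:ℝ) ≤ d^α := Real.rpow_nonneg hd00 α
      have hp1 : wbar ξ α x * (θ * |f ((k:ℝ)/n)|)
          ≤ L*(2:ℝ)^α + L*Q*(((k:ℝ)/n) - x)^(2*m) := by
        rcases eq_or_lt_of_le hθ0 with he | hθp
        · rw [← he, zero_mul, mul_zero]; linarith
        · have hdist := hreg hθp
          have hθf : θ * |f ((k:ℝ)/n)| ≤ |f ((k:ℝ)/n)| :=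
            mul_le_of_le_one_left (abs_nonneg _) hθ1
          rcases le_or_gt (d/2) |((k:ℝ)/n) - ξ| with hfar | hnr
          · have hf1 : |f ((k:ℝ)/n)| ≤ L * (2/d)^α := by
              apply hfb _ ht (2/d) h2d0
              rw [inv_div]; exact hfar
            have hch : wbar ξ α x * (θ * |f ((k:ℝ)/n)|) ≤ d^α * (L * (2/d)^α) := by
              rw [hwd]
              apply mul_le_mul_of_nonneg_left _ hda
              exact hθf.trans hf1
            have he2 : d^α * (L * (2/d)^α) = L * (2:ℝ)^α := by
              rw [show L * (2/d)^α = (2/d)^α * L by ring, ← mul_assoc,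
                ← Real.mul_rpow hd00 h2d0.le]
              rw [show d * (2/d) = 2 by field_simp]
              ring
            rw [he2] at hch
            linarith
          · have hf1 : |f ((k:ℝ)/n)| ≤ L * (2*s)^α := hfb _ ht (2*s) h2s0 hdist
            have h1 := hnear _ hnr
            have hch : wbar ξ α x * (θ * |f ((k:ℝ)/n)|) ≤ d^α * (L * (2*s)^α) := by
              rw [hwd]
              apply mul_le_mul_of_nonneg_left _ hda
              exact hθf.trans hf1
            have hch2 : d^α * (L * (2*s)^α)
                ≤ d^α * (L * (2*s)^α) * ((2/d)^(2*m) * (((k:ℝ)/n) - x)^(2*m)) :=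
              le_mul_of_one_le_right (mul_nonneg hda hG0) h1
            have he2 : d^α * (L * (2*s)^α) * ((2/d)^(2*m) * (((k:ℝ)/n) - x)^(2*m))
                = L*Q*(((k:ℝ)/n) - x)^(2*m) := by
              rw [hQdef]; ring
            rw [he2] at hch2
            linarith
      have hp2 : wbar ξ α x * ((1-θ) * (L*(2*s)^α))
          ≤ L*Q*(((k:ℝ)/n) - x)^(2*m) := by
        rcases eq_or_lt_of_le hθ1 with he | hθl
        · rw [he, sub_self, zero_mul, mul_zero]
          exact mul_nonneg (mul_nonneg hL0 hQ0) (hev _)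
        · obtain ⟨hA, hB⟩ := hmid hθl
          have hnr : |((k:ℝ)/n) - ξ| < d/2 := by
            have h1 : ((k:ℝ)/n) - ξ < 3/s := by linarith
            have h2 : ξ - ((k:ℝ)/n) < 3/s := by linarith
            have h3 : |((k:ℝ)/n) - ξ| < 3/s := abs_sub_lt_iff.mpr ⟨by linarith, by linarith⟩
            have h4 : 3/s < d/2 := by
              rw [div_lt_div_iff₀ hs0 (by norm_num : (0:ℝ) < 2)]
              linarith only [hbg]
            linarith
          have h1 := hnear _ hnr
          have hch : wbar ξ α x * ((1-θ) * (L*(2*s)^α)) ≤ d^α * (L * (2*s)^α) := by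
            rw [hwd]
            apply mul_le_mul_of_nonneg_left _ hda
            exact mul_le_of_le_one_left hG0 (by linarith)
          have hch2 : d^α * (L * (2*s)^α)
              ≤ d^α * (L * (2*s)^α) * ((2/d)^(2*m) * (((k:ℝ)/n) - x)^(2*m)) :=
            le_mul_of_one_le_right (mul_nonneg hda hG0) h1
          have he2 : d^α * (L * (2*s)^α) * ((2/d)^(2*m) * (((k:ℝ)/n) - x)^(2*m))
              = L*Q*(((k:ℝ)/n) - x)^(2*m) := by
            rw [hQdef]; ring
          linarith
      have hsplit : wbar ξ α x * |Fbar ξ n f ((k:ℝ)/n)|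
          ≤ wbar ξ α x * (θ * |f ((k:ℝ)/n)|) + wbar ξ α x * ((1-θ) * (L*(2*s)^α)) := by
        rw [← mul_add]
        exact mul_le_mul_of_nonneg_left hFb (hwnn x)
      linarith only [hsplit, hp1, hp2]
    -- sum it up
    have hsum : wbar ξ α x * ∑ k ∈ Finset.range (n+1),
        |Fbar ξ n f ((k:ℝ)/n)| * bern n k x
        ≤ L*(2:ℝ)^α + 2*L*Q * ∑ k ∈ Finset.range (n+1),
            (((k:ℝ)/n) - x)^(2*m) * bern n k x := by
      rw [Finset.mul_sum]
      have h1 : ∀ k ∈ Finset.range (n+1),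
          wbar ξ α x * (|Fbar ξ n f ((k:ℝ)/n)| * bern n k x)
          ≤ (L*(2:ℝ)^α) * bern n k x
            + (2*L*Q) * ((((k:ℝ)/n) - x)^(2*m) * bern n k x) := by
        intro k hk
        have h2 : wbar ξ α x * (|Fbar ξ n f ((k:ℝ)/n)| * bern n k x)
            = (wbar ξ α x * |Fbar ξ n f ((k:ℝ)/n)|) * bern n k x := by ring
        rw [h2]
        have h3 := mul_le_mul_of_nonneg_right (hperk k hk) (bern_nonneg (n:=n) (k:=k) hx)
        calc (wbar ξ α x * |Fbar ξ n f ((k:ℝ)/n)|) * bern n k x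
            ≤ (L*(2:ℝ)^α + 2*L*Q*(((k:ℝ)/n) - x)^(2*m)) * bern n k x := h3
          _ = (L*(2:ℝ)^α) * bern n k x
              + (2*L*Q) * ((((k:ℝ)/n) - x)^(2*m) * bern n k x) := by ring
      calc ∑ k ∈ Finset.range (n+1), wbar ξ α x * (|Fbar ξ n f ((k:ℝ)/n)| * bern n k x)
          ≤ ∑ k ∈ Finset.range (n+1), ((L*(2:ℝ)^α) * bern n k x
            + (2*L*Q) * ((((k:ℝ)/n) - x)^(2*m) * bern n k x)) := Finset.sum_le_sum h1
        _ = (L*(2:ℝ)^α) * (∑ k ∈ Finset.range (n+1), bern n k x)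
            + (2*L*Q) * ∑ k ∈ Finset.range (n+1),
                (((k:ℝ)/n) - x)^(2*m) * bern n k x := by
            rw [Finset.sum_add_distrib, ← Finset.mul_sum, ← Finset.mul_sum]
        _ = L*(2:ℝ)^α + 2*L*Q * ∑ k ∈ Finset.range (n+1),
              (((k:ℝ)/n) - x)^(2*m) * bern n k x := by
            rw [bern_sum, mul_one]
    have hnm0 : (0:ℝ) < (n:ℝ)^m := pow_pos hnR m
    have hmom : ∑ k ∈ Finset.range (n+1), (((k:ℝ)/n) - x)^(2*m) * bern n k x
        ≤ CK * ((n:ℝ)^m)⁻¹ := by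
      have h0 := hCK n x hx
      have e1 : ∑ k ∈ Finset.range (n+1), (((k:ℝ)/n) - x)^(2*m) * bern n k x
          = (∑ k ∈ Finset.range (n+1), ((k:ℝ) - n*x)^(2*m) * bern n k x)
            * ((n:ℝ)^(2*m))⁻¹ := by
        rw [Finset.sum_mul]
        apply Finset.sum_congr rfl
        intro k hk
        rw [show ((k:ℝ)/n) - x = ((k:ℝ) - n*x) / n by field_simp, div_pow, div_eq_mul_inv]
        ring
      rw [e1]
      have h2 : (∑ k ∈ Finset.range (n+1), ((k:ℝ) - n*x)^(2*m) * bern n k x)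
          * ((n:ℝ)^(2*m))⁻¹ ≤ (CK * (n:ℝ)^m) * ((n:ℝ)^(2*m))⁻¹ :=
        mul_le_mul_of_nonneg_right h0 (by positivity)
      have h3 : (CK * (n:ℝ)^m) * ((n:ℝ)^(2*m))⁻¹ = CK * ((n:ℝ)^m)⁻¹ := by
        rw [two_mul, pow_add]
        field_simp
      linarith only [h2, h3]
    have hQn : Q * (CK * ((n:ℝ)^m)⁻¹) ≤ (2:ℝ)^α * (4:ℝ)^m * CK := by
      have hds0 : (0:ℝ) < d * s := by positivity
      have hu1 : (1:ℝ) ≤ d * s := by linarith only [hbg]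
      have hua : (d*s)^α ≤ (d*s)^(2*m) := by
        have h1 : (d*s)^α ≤ (d*s)^(((2*m : ℕ)):ℝ) :=
          Real.rpow_le_rpow_of_exponent_le hu1 (by push_cast; linarith)
        rwa [Real.rpow_natCast] at h1
      have e1 : (2*s)^α * d^α = (2:ℝ)^α * (d*s)^α := by
        rw [← Real.mul_rpow h2s0.le hd00, show (2*s)*d = 2*(d*s) by ring,
          Real.mul_rpow (by norm_num) hds0.le]
      have e2 : (2/d)^(2*m) * ((n:ℝ)^m)⁻¹ = (4:ℝ)^m * ((d*s)^(2*m))⁻¹ := by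
        have hn_eq : ((n:ℝ))^m = (s^2)^m := by rw [sq, hss]
        rw [hn_eq, div_pow, mul_pow]
        rw [show ((2:ℝ))^(2*m) = 4^m by rw [pow_mul]; norm_num]
        rw [show (s^2)^m = s^(2*m) by rw [← pow_mul]]
        field_simp
      have hkey : Q * ((n:ℝ)^m)⁻¹ ≤ (2:ℝ)^α * (4:ℝ)^m := by
        have e3 : Q * ((n:ℝ)^m)⁻¹
            = ((2*s)^α * d^α) * ((2/d)^(2*m) * ((n:ℝ)^m)⁻¹) := by
          rw [hQdef]; ring
        rw [e3, e1, e2]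
        have hp : (0:ℝ) < (d*s)^(2*m) := pow_pos hds0 _
        have h4 : (d*s)^α * ((d*s)^(2*m))⁻¹ ≤ 1 := by
          rw [← div_eq_mul_inv, div_le_one hp]
          exact hua
        calc (2:ℝ)^α * (d*s)^α * ((4:ℝ)^m * ((d*s)^(2*m))⁻¹)
            = ((2:ℝ)^α * (4:ℝ)^m) * ((d*s)^α * ((d*s)^(2*m))⁻¹) := by ring
          _ ≤ ((2:ℝ)^α * (4:ℝ)^m) * 1 := by
              apply mul_le_mul_of_nonneg_left h4 (by positivity)
          _ = (2:ℝ)^α * (4:ℝ)^m := mul_one _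
      calc Q * (CK * ((n:ℝ)^m)⁻¹) = (Q * ((n:ℝ)^m)⁻¹) * CK := by ring
        _ ≤ ((2:ℝ)^α * (4:ℝ)^m) * CK :=
            mul_le_mul_of_nonneg_right hkey (by linarith)
        _ = (2:ℝ)^α * (4:ℝ)^m * CK := by ring
    have h2LQ : (0:ℝ) ≤ 2*L*Q := by positivity
    have hfin : 2*L*Q * ∑ k ∈ Finset.range (n+1), (((k:ℝ)/n) - x)^(2*m) * bern n k x
        ≤ 2*L * ((2:ℝ)^α * (4:ℝ)^m * CK) := by
      calc 2*L*Q * ∑ k ∈ Finset.range (n+1), (((k:ℝ)/n) - x)^(2*m) * bern n k x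
          ≤ 2*L*Q * (CK * ((n:ℝ)^m)⁻¹) := by
            apply mul_le_mul_of_nonneg_left hmom h2LQ
        _ = 2*L * (Q * (CK * ((n:ℝ)^m)⁻¹)) := by ring
        _ ≤ 2*L * ((2:ℝ)^α * (4:ℝ)^m * CK) := by
            apply mul_le_mul_of_nonneg_left hQn (by linarith)
    have hC2 : L*(2:ℝ)^α + 2*L*((2:ℝ)^α * (4:ℝ)^m * CK)
        ≤ ((14:ℝ)^α + (2:ℝ)^α + 2*(2:ℝ)^α*(4:ℝ)^m*CK + 1) * L := by
      linarith only [mul_nonneg h14.le hL0, hL0]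
    linarith only [hwx, hsum, hfin, hC2]
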